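/- arXiv:1406.2438 — 3 statements merged into one kernel-verified Lean document; each statement's English description precedes it below -/
import Mathlib

section
/- Every connected cubic graph of order n has an induced 2-regular subgraph of order at least (n + 2)/4. -/
/-!
Take an induced 2-regular set `S` of maximum size. In a cubic graph every vertex of `S` has
exactly one neighbour outside `S`, so the outer boundary `W` of `S` (the vertices outside `S` with
a neighbour in `S`) has `|W| ≤ |S|`. The exterior `F` of the remaining vertices sends no edge to
`S`, so by maximality it contains no induced cycle; as a shortest cycle is always induced, `G[F]`
is a forest and spans at most `|F| - 1` edges. Every vertex of `W` has a neighbour in `S`, hence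
at most two in `F`, and counting degrees in `F` gives `3|F| ≤ 2(|F| - 1) + 2|W|`. Hence
`n = |S| + |W| + |F| ≤ |S| + 3|W| - 2 ≤ 4|S| - 2`.
-/

open SimpleGraph

/-- `c` is an induced cycle of `G`. -/
def IsInducedCycle {V : Type*} (G : SimpleGraph V) {v : V} (c : G.Walk v v) : Prop :=
  c.IsCycle ∧ ∀ x ∈ c.support, ∀ y ∈ c.support, G.Adj x y → s(x, y) ∈ c.edges

/-- `G` has no induced cycle of length more than `k`. -/
def KChordal {V : Type*} (G : SimpleGraph V) (k : ℕ) : Prop :=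
  ∀ (v : V) (c : G.Walk v v), IsInducedCycle G c → c.length ≤ k

/-- The induced subgraph on `s` is 2-regular. -/
def TwoRegularInduced {V : Type*} (G : SimpleGraph V) (s : Set V) : Prop :=
  ∀ v ∈ s, (s ∩ G.neighborSet v).ncard = 2

open Finset

namespace SimpleGraph

variable {V : Type*} {G : SimpleGraph V}

theorem not_isAcyclic_of_two_le_ncard_neighborSet [Finite V] [Nonempty V]
    (h : ∀ v, 2 ≤ (G.neighborSet v).ncard) : ¬ G.IsAcyclic := by
  obtain ⟨u, v, p, hp, hmax⟩ := Walk.exists_isPath_forall_isPath_length_le_length G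
  -- The end `v` of a longest path has a neighbour `w ≠ p.penultimate`, necessarily on the path;
  -- the segment from `w` to `v` and the edge `wv` then form two distinct `w`-`v` paths.
  obtain ⟨w, (hw : G.Adj v w), hwne⟩ := Set.exists_ne_of_one_lt_ncard (h v) p.penultimate
  have hwp : w ∈ p.support := by
    by_contra hwp
    have := hmax _ _ _ (hp.concat hwp hw)
    rw [Walk.length_concat] at this
    omega
  obtain ⟨i, rfl, hi⟩ := Walk.mem_support_iff_exists_getVert.mp hwp
  have hiv : i ≠ p.length := by
    rintro rfl
    exact G.irrefl (p.getVert_length ▸ hw)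
  have hi2 : i + 2 ≤ p.length := by
    have : i ≠ p.length - 1 := by rintro rfl; exact hwne rfl
    omega
  intro hacyc
  obtain ⟨_, _, _, c, hc, -⟩ := (hp.drop i).exists_isCycle_length_le_add_of_ne
    (q := .cons hw.symm .nil) (by simp [hw.ne.symm]) fun heq => by
      have := congrArg Walk.length heq
      simp only [Walk.drop_length, Walk.length_cons, Walk.length_nil, zero_add] at this
      omega
  exact hacyc c hc

theorem Walk.IsCycle.support_inter_neighborSet_start_of_girth {u : V} {c : G.Walk u u}
    (hc : c.IsCycle) (hgirth : c.length = G.girth) :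
    {x | x ∈ c.support} ∩ G.neighborSet u = {c.snd, c.penultimate} := by
  have hnil : ¬ c.Nil := hc.not_nil
  ext x
  refine ⟨fun ⟨hx, (hux : G.Adj u x)⟩ => ?_, ?_⟩
  · obtain ⟨i, rfl, hi⟩ := Walk.mem_support_iff_exists_getVert.mp hx
    by_contra hchord
    simp only [Set.mem_insert_iff, Set.mem_singleton_iff, not_or] at hchord
    have hi0 : i ≠ 0 := by rintro rfl; exact G.irrefl (c.getVert_zero ▸ hux)
    have hil : i ≠ c.length := by rintro rfl; exact G.irrefl (c.getVert_length ▸ hux)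
    have hi1 : i ≠ 1 := by rintro rfl; exact hchord.1 rfl
    have hil1 : i ≠ c.length - 1 := by rintro rfl; exact hchord.2 rfl
    -- the chord `u x` and the arc `c.take i` close a cycle shorter than `c`
    obtain ⟨_, _, _, c', hc', hlen⟩ :=
      (hc.isPath_take (n := i) (by omega)).exists_isCycle_length_le_add_of_ne
        (q := .cons hux .nil) (by simp [hux.ne]) fun heq => by
          have := congrArg Walk.length heq
          simp only [Walk.take_length, Walk.length_cons, Walk.length_nil, zero_add] at this
          omega
    have := G.girth_le_length hc'
    simp only [Walk.take_length, Walk.length_cons, Walk.length_nil, zero_add] at hlen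
    omega
  · rintro (rfl | rfl)
    · exact ⟨c.getVert_mem_support 1, c.adj_snd hnil⟩
    · exact ⟨c.getVert_mem_support _, (c.adj_penultimate hnil).symm⟩

theorem Walk.IsCycle.twoRegularInduced_support_of_girth {u : V} {c : G.Walk u u}
    (hc : c.IsCycle) (hgirth : c.length = G.girth) : TwoRegularInduced G {x | x ∈ c.support} := by
  classical
  intro v hv
  have hc' := hc.rotate hv
  have hsupp : {x | x ∈ c.support} = {x | x ∈ (c.rotate v hv).support} := by
    simp only [Walk.mem_support_rotate_iff]
  rw [hsupp, hc'.support_inter_neighborSet_start_of_girth (by simpa using hgirth)]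
  exact Set.ncard_pair hc'.snd_ne_penultimate

theorem image_val_neighborSet_induce (A : Set V) (a : A) :
    Subtype.val '' (G.induce A).neighborSet a = A ∩ G.neighborSet a := by
  ext x
  constructor
  · rintro ⟨y, hy, rfl⟩
    exact ⟨y.2, hy⟩
  · rintro ⟨hx, hax⟩
    exact ⟨⟨x, hx⟩, hax, rfl⟩

theorem _root_.TwoRegularInduced.image_val {A : Set V} {s : Set A}
    (h : TwoRegularInduced (G.induce A) s) : TwoRegularInduced G (Subtype.val '' s) := by
  rintro _ ⟨a, ha, rfl⟩
  have hsA : Subtype.val '' s ⊆ A := by rintro _ ⟨b, -, rfl⟩; exact b.2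
  rw [← h a ha, ← Set.ncard_image_of_injective _ Subtype.val_injective,
    Set.image_inter Subtype.val_injective, image_val_neighborSet_induce,
    ← Set.inter_assoc, Set.inter_eq_left.mpr hsA]

theorem exists_twoRegularInduced_subset {A : Set V} (hfin : A.Finite) (hne : A.Nonempty)
    (hdeg : ∀ v ∈ A, 2 ≤ (A ∩ G.neighborSet v).ncard) :
    ∃ c ⊆ A, c.Nonempty ∧ TwoRegularInduced G c := by
  have := hfin.to_subtype
  have := hne.to_subtype
  have hcyc : ¬ (G.induce A).IsAcyclic := not_isAcyclic_of_two_le_ncard_neighborSet fun a => by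
    rw [← Set.ncard_image_of_injective _ Subtype.val_injective, image_val_neighborSet_induce]
    exact hdeg a a.2
  obtain ⟨a, c, hc, hgirth⟩ := exists_girth_eq_length.mpr hcyc
  refine ⟨Subtype.val '' {x | x ∈ c.support}, ?_, ⟨a, a, c.start_mem_support, rfl⟩,
    (hc.twoRegularInduced_support_of_girth hgirth.symm).image_val⟩
  rintro _ ⟨b, -, rfl⟩
  exact b.2

theorem _root_.TwoRegularInduced.union {s t : Set V} (hs : TwoRegularInduced G s)
    (ht : TwoRegularInduced G t) (hst : ∀ x ∈ s, ∀ y ∈ t, ¬ G.Adj x y) :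
    TwoRegularInduced G (s ∪ t) := by
  rintro v (hv | hv)
  · have : t ∩ G.neighborSet v = ∅ :=
      Set.eq_empty_of_forall_notMem fun y ⟨hy, hvy⟩ => hst v hv y hy hvy
    rw [Set.union_inter_distrib_right, this, Set.union_empty]
    exact hs v hv
  · have : s ∩ G.neighborSet v = ∅ :=
      Set.eq_empty_of_forall_notMem fun y ⟨hy, hvy⟩ => hst y hy v hv hvy.symm
    rw [Set.union_inter_distrib_right, this, Set.empty_union]
    exact ht v hv

section Counting

variable [DecidableRel G.Adj]

theorem ncard_coe_inter_neighborSet (t : Finset V) (v : V) :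
    ((t : Set V) ∩ G.neighborSet v).ncard = #{y ∈ t | G.Adj v y} := by
  rw [← Set.ncard_coe_finset]
  congr 1
  ext
  simp

theorem sum_card_filter_adj_comm (s t : Finset V) :
    ∑ x ∈ s, #{y ∈ t | G.Adj x y} = ∑ y ∈ t, #{x ∈ s | G.Adj y x} := by
  simpa only [bipartiteAbove, bipartiteBelow, G.adj_comm _ (_ : V)] using
    sum_card_bipartiteAbove_eq_sum_card_bipartiteBelow (s := s) (t := t) (r := G.Adj)

variable [DecidableEq V]

theorem sum_card_filter_adj_eq_sum_erase_add {t : Finset V} {v : V} (hv : v ∈ t) :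
    ∑ x ∈ t, #{y ∈ t | G.Adj x y} =
      ∑ x ∈ t.erase v, #{y ∈ t.erase v | G.Adj x y} + 2 * #{y ∈ t | G.Adj v y} := by
  have hstep : ∀ x ∈ t.erase v,
      #{y ∈ t | G.Adj x y} = #{y ∈ t.erase v | G.Adj x y} + if G.Adj x v then 1 else 0 := by
    intro x _
    rw [filter_erase]
    split_ifs with hxv
    · rw [card_erase_add_one (mem_filter.mpr ⟨hv, hxv⟩)]
    · rw [erase_eq_of_notMem fun h => hxv (mem_filter.mp h).2, add_zero]
  have hback : ∑ x ∈ t.erase v, (if G.Adj x v then 1 else 0) = #{y ∈ t | G.Adj v y} := by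
    rw [sum_boole, Nat.cast_id, filter_erase,
      erase_eq_of_notMem (s := {x ∈ t | G.Adj x v}) fun h => G.irrefl (mem_filter.mp h).2]
    simp_rw [G.adj_comm _ v]
  rw [← add_sum_erase t _ hv, sum_congr rfl hstep, sum_add_distrib, hback]
  ring

theorem sum_card_filter_adj_add_two_le {t : Finset V} (ht : t.Nonempty)
    (hno : ∀ c ⊆ (t : Set V), c.Nonempty → ¬ TwoRegularInduced G c) :
    ∑ x ∈ t, #{y ∈ t | G.Adj x y} + 2 ≤ 2 * #t := by
  induction t using Finset.strongInduction with | H t ih => ?_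
  -- `t` is a forest: it has a vertex of degree at most one, which we delete
  obtain ⟨v, hv, hdeg⟩ : ∃ v ∈ t, #{y ∈ t | G.Adj v y} ≤ 1 := by
    by_contra! hdeg
    obtain ⟨c, hct, hc, hreg⟩ :=
      exists_twoRegularInduced_subset (G := G) t.finite_toSet (by simpa) fun v hv => by
        rw [ncard_coe_inter_neighborSet]
        exact hdeg v hv
    exact hno c hct hc hreg
  have hdeg' : #{y ∈ t | G.Adj v y} ≤ #(t.erase v) :=
    card_le_card fun y hy => by
      rw [mem_filter] at hy
      exact mem_erase.mpr ⟨hy.2.ne', hy.1⟩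
  have hcard := card_erase_add_one hv
  rw [sum_card_filter_adj_eq_sum_erase_add hv]
  obtain ht' | ht' := (t.erase v).eq_empty_or_nonempty
  · simp only [ht', sum_empty, card_empty] at hdeg' hcard ⊢
    omega
  · have := ih _ (erase_ssubset hv) ht' fun c hc => hno c (hc.trans (by simp))
    omega

end Counting

section Cubic

variable [Fintype V] [DecidableEq V] [DecidableRel G.Adj]

variable (G) in
def outerBoundary (S : Finset V) : Finset V := {w ∈ Sᶜ | ∃ v ∈ S, G.Adj v w}

variable (G) in
def exterior (S : Finset V) : Finset V := {w ∈ Sᶜ | ¬ ∃ v ∈ S, G.Adj v w}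

theorem card_add_card_outerBoundary_add_card_exterior (S : Finset V) :
    #S + #(G.outerBoundary S) + #(G.exterior S) = Fintype.card V := by
  rw [add_assoc, outerBoundary, exterior, card_filter_add_card_filter_not,
    card_add_card_compl]

theorem outerBoundary_subset_compl (S : Finset V) : G.outerBoundary S ⊆ Sᶜ := filter_subset _ _

theorem exterior_subset_compl (S : Finset V) : G.exterior S ⊆ Sᶜ := filter_subset _ _

variable (G) in
theorem card_filter_adj_add_card_filter_adj_compl (S : Finset V) (v : V) :
    #{y ∈ S | G.Adj v y} + #{y ∈ Sᶜ | G.Adj v y} = (G.neighborSet v).ncard := by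
  rw [← card_union_of_disjoint (disjoint_filter_filter disjoint_compl_right), ← filter_union,
    union_compl, ← ncard_coe_inter_neighborSet, coe_univ, Set.univ_inter]

variable {S : Finset V}

theorem card_outerBoundary_le (hcubic : ∀ v, (G.neighborSet v).ncard = 3)
    (hS : TwoRegularInduced G S) : #(G.outerBoundary S) ≤ #S :=
  calc #(G.outerBoundary S)
    _ ≤ ∑ w ∈ G.outerBoundary S, #{v ∈ S | G.Adj w v} := by
      rw [card_eq_sum_ones]
      refine sum_le_sum fun w hw => ?_
      obtain ⟨v, hv, hvw⟩ := (mem_filter.mp hw).2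
      exact card_pos.mpr ⟨v, mem_filter.mpr ⟨hv, hvw.symm⟩⟩
    _ = ∑ v ∈ S, #{w ∈ G.outerBoundary S | G.Adj v w} := (sum_card_filter_adj_comm _ _).symm
    _ ≤ ∑ v ∈ S, 1 := sum_le_sum fun v hv => by
      have hsplit := G.card_filter_adj_add_card_filter_adj_compl S v
      rw [← ncard_coe_inter_neighborSet, hS v hv, hcubic] at hsplit
      have : #{w ∈ G.outerBoundary S | G.Adj v w} ≤ #{w ∈ Sᶜ | G.Adj v w} :=
        card_le_card (filter_subset_filter _ (G.outerBoundary_subset_compl S))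
      omega
    _ = #S := by simp

theorem card_filter_adj_exterior_add_card_filter_adj_outerBoundary
    (hcubic : ∀ v, (G.neighborSet v).ncard = 3) {x : V} (hx : x ∈ G.exterior S) :
    #{y ∈ G.exterior S | G.Adj x y} + #{y ∈ G.outerBoundary S | G.Adj x y} = 3 := by
  have hS : #{y ∈ S | G.Adj x y} = 0 :=
    card_eq_zero.mpr <| filter_eq_empty_iff.mpr fun y hy hxy =>
      (mem_filter.mp hx).2 ⟨y, hy, hxy.symm⟩
  have hcompl : {y ∈ Sᶜ | G.Adj x y} =
      {y ∈ G.outerBoundary S | G.Adj x y} ∪ {y ∈ G.exterior S | G.Adj x y} := by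
    rw [← filter_union, outerBoundary, exterior, filter_union_filter_not_eq]
  have hdisj : Disjoint {y ∈ G.outerBoundary S | G.Adj x y} {y ∈ G.exterior S | G.Adj x y} :=
    disjoint_filter_filter (disjoint_filter_filter_not _ _ _)
  have := G.card_filter_adj_add_card_filter_adj_compl S x
  rw [hcompl, card_union_of_disjoint hdisj, hS, hcubic] at this
  omega

theorem card_filter_adj_exterior_le_two (hcubic : ∀ v, (G.neighborSet v).ncard = 3) {w : V}
    (hw : w ∈ G.outerBoundary S) :
    #{y ∈ G.exterior S | G.Adj w y} ≤ 2 := by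
  obtain ⟨v, hv, hvw⟩ := (mem_filter.mp hw).2
  have hS : 1 ≤ #{y ∈ S | G.Adj w y} := card_pos.mpr ⟨v, mem_filter.mpr ⟨hv, hvw.symm⟩⟩
  have : #{y ∈ G.exterior S | G.Adj w y} ≤ #{y ∈ Sᶜ | G.Adj w y} :=
    card_le_card (filter_subset_filter _ (G.exterior_subset_compl S))
  have := G.card_filter_adj_add_card_filter_adj_compl S w
  rw [hcubic] at this
  omega

theorem card_exterior_add_two_le (hcubic : ∀ v, (G.neighborSet v).ncard = 3)
    (hne : (G.exterior S).Nonempty)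
    (hno : ∀ c ⊆ (G.exterior S : Set V), c.Nonempty → ¬ TwoRegularInduced G c) :
    #(G.exterior S) + 2 ≤ 2 * #(G.outerBoundary S) := by
  have hdeg : ∑ x ∈ G.exterior S, #{y ∈ G.exterior S | G.Adj x y} +
      ∑ x ∈ G.exterior S, #{y ∈ G.outerBoundary S | G.Adj x y} = 3 * #(G.exterior S) := by
    rw [← sum_add_distrib, sum_congr rfl fun x hx =>
      card_filter_adj_exterior_add_card_filter_adj_outerBoundary hcubic hx]
    simp [mul_comm]
  have hcross : ∑ x ∈ G.exterior S, #{y ∈ G.outerBoundary S | G.Adj x y} ≤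
      2 * #(G.outerBoundary S) := by
    rw [sum_card_filter_adj_comm]
    refine (sum_le_sum fun w hw => card_filter_adj_exterior_le_two hcubic hw).trans ?_
    simp [mul_comm]
  have := sum_card_filter_adj_add_two_le hne hno
  omega

theorem not_twoRegularInduced_of_subset_exterior (hS : TwoRegularInduced G S)
    (hmax : ∀ t : Finset V, TwoRegularInduced G t → #t ≤ #S) {c : Set V}
    (hc : c ⊆ G.exterior S) (hne : c.Nonempty) : ¬ TwoRegularInduced G c := by
  classical
  intro hreg
  have hunion : TwoRegularInduced G ↑(S ∪ c.toFinset) := by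
    rw [coe_union, Set.coe_toFinset]
    exact hS.union hreg fun v hv w hw hvw => (mem_filter.mp (hc hw)).2 ⟨v, hv, hvw⟩
  have hdisj : Disjoint S c.toFinset := Finset.disjoint_left.mpr fun v hv hvc =>
    mem_compl.mp (G.exterior_subset_compl S (hc (Set.mem_toFinset.mp hvc))) hv
  have := hmax _ hunion
  rw [card_union_of_disjoint hdisj] at this
  have : 0 < #c.toFinset := card_pos.mpr (Set.toFinset_nonempty.mpr hne)
  omega

end Cubic

end SimpleGraph

theorem stmt4 {V : Type*} [Fintype V] (G : SimpleGraph V)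
    (hconn : G.Connected) (hcubic : ∀ v : V, (G.neighborSet v).ncard = 3) :
    ∃ s : Set V, TwoRegularInduced G s ∧
      ((Fintype.card V : ℝ) + 2) / 4 ≤ (s.ncard : ℝ) := by
  classical
  obtain ⟨S, hS, hmax⟩ : ∃ S : Finset V, TwoRegularInduced G S ∧
      ∀ t : Finset V, TwoRegularInduced G t → #t ≤ #S := by
    obtain ⟨S, hS, hmax⟩ := exists_max_image {t : Finset V | TwoRegularInduced G t} card
      ⟨∅, by simp [TwoRegularInduced]⟩
    exact ⟨S, (mem_filter.mp hS).2, fun t ht => hmax t (by simpa using ht)⟩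
  refine ⟨S, hS, ?_⟩
  have hpart := G.card_add_card_outerBoundary_add_card_exterior S
  have hboundary := card_outerBoundary_le hcubic hS
  have hpos : 0 < Fintype.card V := @Fintype.card_pos _ _ hconn.nonempty
  have hkey : Fintype.card V + 2 ≤ #S * 4 := by
    obtain hext | hext := (G.exterior S).eq_empty_or_nonempty
    · rw [hext, card_empty] at hpart
      omega
    · have := card_exterior_add_two_le hcubic hext fun c hc hne =>
        not_twoRegularInduced_of_subset_exterior hS hmax hc hne
      omega
  rw [Set.ncard_coe_finset, div_le_iff₀ (by norm_num)]
  exact_mod_cast hkey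
end

section
/- Every 2-connected graph in which some vertex and hence every vertex lies on an induced cycle, that is triangle-free, K_{2,3}-free (as induced subgraph), subcubic, and 4-chordal, and that contains an induced 4-cycle with a vertex of degree 3 having a neighbor outside the cycle, contains an induced subgraph isomorphic to B_3 = P2 □ P3. -/
/-!
Let `x a m b` be the induced 4-cycle, where `x` has degree 3 and third neighbour `y`.
Triangle-freeness and `K_{2,3}`-freeness make `y` non-adjacent to `a`, `m` and `b`. As `G - x`
is connected, it contains a shortest path `p` from `y` to `{a, b}`, say ending at `a`. A shortest
path is chordless, so `p` closed up through `x` is an induced cycle, and 4-chordality forces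
`p = y z a`. Then `y x b` over `z a m` is an induced `B_3`: its non-edges `y m` and `z b` come
from `K_{2,3}`-freeness, all the others from triangle-freeness.
-/

open SimpleGraph

/-- `G` has at least 3 vertices and stays connected after deleting any vertex. -/
def TwoConnected {V : Type*} (G : SimpleGraph V) : Prop :=
  3 ≤ Nat.card V ∧ ∀ v : V, (G.induce {w | w ≠ v}).Connected

/-- The diamond `D`: `K4` minus an edge. -/
def diamond : SimpleGraph (Fin 4) := (completeGraph (Fin 4)).deleteEdges {s(0, 1)}

/-- `D'`: the diamond plus a new vertex adjacent to its two degree-2 vertices. -/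
def diamondPlus : SimpleGraph (Fin 5) :=
  SimpleGraph.fromRel (fun a b =>
    (a, b) ∈ [((0 : Fin 5), (2 : Fin 5)), (0, 3), (1, 2), (1, 3), (2, 3), (4, 0), (4, 1)])

/-- The prism `P2 □ K3`. -/
def prism : SimpleGraph (Fin 2 × Fin 3) :=
  (SimpleGraph.pathGraph 2).boxProd (completeGraph (Fin 3))

/-- `K_{3,3}` minus an edge. -/
def K33minus : SimpleGraph (Fin 3 ⊕ Fin 3) :=
  (completeBipartiteGraph (Fin 3) (Fin 3)).deleteEdges {s(Sum.inl 0, Sum.inr 0)}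

/-- The ladder `B_k = P2 □ P_k`. -/
def ladder (k : ℕ) : SimpleGraph (Fin 2 × Fin k) :=
  (SimpleGraph.pathGraph 2).boxProd (SimpleGraph.pathGraph k)

/-- `B_k'`: `B_k` plus one vertex joined to the two adjacent degree-2 vertices in column 0. -/
def ladder' (k : ℕ) : SimpleGraph ((Fin 2 × Fin k) ⊕ Unit) :=
  SimpleGraph.fromRel (fun a b =>
    match a, b with
    | Sum.inl x, Sum.inl y => (ladder k).Adj x y
    | Sum.inl x, Sum.inr _ => x.2.val = 0
    | _, _ => False)

/-- `B_k''`: `B_k'` plus one vertex joined to the two adjacent degree-2 vertices in the last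
column. -/
def ladder'' (k : ℕ) : SimpleGraph ((Fin 2 × Fin k) ⊕ Bool) :=
  SimpleGraph.fromRel (fun a b =>
    match a, b with
    | Sum.inl x, Sum.inl y => (ladder k).Adj x y
    | Sum.inl x, Sum.inr c => if c then x.2.val = k - 1 else x.2.val = 0
    | _, _ => False)

namespace SimpleGraph.Walk

variable {V : Type*} {G : SimpleGraph V} {u v : V}

theorem isPath_of_forall_length_le {p : G.Walk u v}
    (hmin : ∀ q : G.Walk u v, q.support ⊆ p.support → p.length ≤ q.length) : p.IsPath := by
  classical
  rw [← p.bypass_eq_self_of_length_le_length_bypass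
    (hmin _ p.support_bypass_subset_support)]
  exact p.bypass_isPath

theorem isChordless_of_forall_length_le {p : G.Walk u v}
    (hmin : ∀ q : G.Walk u v, q.support ⊆ p.support → p.length ≤ q.length) :
    p.IsChordless := by
  have shortcut : ∀ i j, i < j → j ≤ p.length → G.Adj (p.getVert i) (p.getVert j) →
      s(p.getVert i, p.getVert j) ∈ p.edges := by
    intro i j hij hj hadj
    have hlen := hmin ((p.take i).append (cons hadj (p.drop j))) (by
      intro z hz
      rw [mem_support_append_iff, support_cons, List.mem_cons] at hz
      rcases hz with hz | rfl | hz
      · exact (p.isSubwalk_take i).support_subset hz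
      · exact p.getVert_mem_support i
      · exact (p.isSubwalk_drop j).support_subset hz)
    simp only [length_append, take_length, length_cons, drop_length] at hlen
    obtain rfl : j = i + 1 := by omega
    exact (p.mk_mem_edges_iff_exists).mpr ⟨i, by omega, rfl⟩
  rw [isChordless_iff_forall_mem_edges]
  intro a b ha hb hab
  obtain ⟨i, rfl, hi⟩ := mem_support_iff_exists_getVert.mp ha
  obtain ⟨j, rfl, hj⟩ := mem_support_iff_exists_getVert.mp hb
  rcases lt_trichotomy i j with hij | rfl | hji
  · exact shortcut i j hij hj hab
  · exact absurd rfl hab.ne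
  · exact Sym2.eq_swap ▸ shortcut j i hji hi hab.symm

theorem exists_chordless_path_to_set {S T : Set V} {d₀ : V} (hd₀ : d₀ ∈ S) (w : G.Walk u d₀)
    (hw : ∀ z ∈ w.support, z ∉ T) :
    ∃ d ∈ S, ∃ p : G.Walk u d, p.IsPath ∧ p.IsChordless ∧ (∀ z ∈ p.support, z ∉ T) ∧
      ∀ z ∈ p.support, z ∈ S → z = d := by
  classical
  have hex : ∃ n, ∃ d ∈ S, ∃ p : G.Walk u d, (∀ z ∈ p.support, z ∉ T) ∧ p.length = n :=
    ⟨_, d₀, hd₀, w, hw, rfl⟩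
  obtain ⟨d, hd, p, hpT, hpn⟩ := Nat.find_spec hex
  have hmin : ∀ d' ∈ S, ∀ q : G.Walk u d', (∀ z ∈ q.support, z ∉ T) → p.length ≤ q.length :=
    fun d' hd' q hq => hpn ▸ Nat.find_min' hex ⟨d', hd', q, hq, rfl⟩
  have hshort : ∀ q : G.Walk u d, q.support ⊆ p.support → p.length ≤ q.length :=
    fun q hq => hmin d hd q fun z hz => hpT z (hq hz)
  refine ⟨d, hd, p, isPath_of_forall_length_le hshort, isChordless_of_forall_length_le hshort,
    hpT, fun z hz hzS => ?_⟩
  by_contra hzd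
  have := hmin z hzS (p.takeUntil z hz)
    fun z' hz' => hpT z' (p.support_takeUntil_subset_support hz hz')
  exact (p.length_takeUntil_lt_length hz hzd).not_ge this

theorem IsCycle.exists_of_length_eq_four {x : V} {c : G.Walk x x} (hc : c.IsCycle)
    (h4 : c.length = 4) :
    ∃ a m b, G.Adj x a ∧ G.Adj a m ∧ G.Adj m b ∧ G.Adj b x ∧ x ≠ m ∧ a ≠ b ∧
      ∀ z, z ∈ c.support ↔ z = x ∨ z = a ∨ z = m ∨ z = b := by
  obtain _ | ⟨hxa, _ | ⟨ham, _ | ⟨hmb, _ | ⟨hbx, _ | ⟨_, _⟩⟩⟩⟩⟩ := c <;> simp at h4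
  rename_i a m b
  have hnd := hc.support_nodup
  simp only [support_cons, support_nil, List.tail_cons, List.nodup_cons, List.mem_cons,
    List.not_mem_nil] at hnd
  exact ⟨a, m, b, hxa, ham, hmb, hbx, by tauto, by tauto, fun z => by simp; tauto⟩

end SimpleGraph.Walk

section

open Walk

variable {V : Type*} {G : SimpleGraph V}

theorem isInducedCycle_cons_concat {x y d : V} {p : G.Walk y d} (hp : p.IsPath)
    (hpc : p.IsChordless) (hyd : y ≠ d) (hx : x ∉ p.support) (hxy : G.Adj x y)
    (hdx : G.Adj d x) (hnb : ∀ z ∈ p.support, G.Adj x z → z = y ∨ z = d) :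
    IsInducedCycle G (cons hxy (p.concat hdx)) := by
  refine ⟨(cons_isCycle_iff _ _).mpr ⟨hp.concat hx hdx, ?_⟩, ?_⟩
  · rw [edges_concat, List.concat_eq_append, List.mem_append, List.mem_singleton, not_or]
    refine ⟨fun h => hx (p.fst_mem_support_of_mem_edges h), fun h => ?_⟩
    rcases Sym2.eq_iff.mp h with ⟨rfl, -⟩ | ⟨-, rfl⟩
    · exact hx p.end_mem_support
    · exact hyd rfl
  · have hxz : ∀ z ∈ p.support, G.Adj x z → s(x, z) ∈ (cons hxy (p.concat hdx)).edges := by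
      intro z hz hxz
      rcases hnb z hz hxz with rfl | rfl <;> simp [Sym2.eq_swap]
    intro a ha b hb hab
    simp only [support_cons, support_concat, List.mem_cons, List.mem_append, List.mem_nil_iff,
      or_false] at ha hb
    rcases ha with rfl | ha | rfl <;> rcases hb with rfl | hb | rfl
    all_goals first
      | exact absurd rfl hab.ne
      | exact hxz _ ‹_› hab
      | exact Sym2.eq_swap ▸ hxz _ ‹_› hab.symm
      | simp [hpc.mem_edges ha hb hab]

theorem KChordal.length_add_two_le {k : ℕ} (hch : KChordal G k) {x y d : V} {p : G.Walk y d}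
    (hp : p.IsPath) (hpc : p.IsChordless) (hyd : y ≠ d) (hx : x ∉ p.support) (hxy : G.Adj x y)
    (hdx : G.Adj d x) (hnb : ∀ z ∈ p.support, G.Adj x z → z = y ∨ z = d) :
    p.length + 2 ≤ k := by
  simpa only [length_cons, length_concat] using
    hch _ _ (isInducedCycle_cons_concat hp hpc hyd hx hxy hdx hnb)

theorem not_adj_of_cliqueFree_three (htf : G.CliqueFree 3) {v a b : V} (hva : G.Adj v a)
    (hvb : G.Adj v b) : ¬ G.Adj a b :=
  fun hab => isIndepSet_neighborSet_of_triangleFree G htf v hva hvb hab.ne hab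

theorem TwoConnected.exists_walk_avoiding (h : TwoConnected G) {x u v : V} (hu : u ≠ x)
    (hv : v ≠ x) : ∃ w : G.Walk u v, x ∉ w.support := by
  obtain ⟨w⟩ := (h.2 x).preconnected ⟨u, hu⟩ ⟨v, hv⟩
  have hw : x ∉ (w.map (Embedding.induce {w | w ≠ x}).toHom).support := by
    rw [Walk.support_map]
    simp
  exact ⟨_, hw⟩

theorem eq_or_eq_or_eq_of_ncard_neighborSet_eq_three {x a b c w : V}
    (hdeg : (G.neighborSet x).ncard = 3) (ha : G.Adj x a) (hb : G.Adj x b) (hc : G.Adj x c)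
    (hab : a ≠ b) (hac : a ≠ c) (hbc : b ≠ c) (hw : G.Adj x w) : w = a ∨ w = b ∨ w = c := by
  have hsub : ({a, b, c} : Set V) ⊆ G.neighborSet x := by
    rintro w (rfl | rfl | rfl) <;> assumption
  have heq := Set.eq_of_subset_of_ncard_le hsub
    (by rw [hdeg, Set.ncard_insert_of_notMem (by simp [hab, hac]),
      Set.ncard_pair hbc]) (Set.finite_of_ncard_ne_zero (by omega))
  have hw' : w ∈ G.neighborSet x := hw
  simpa [← heq] using hw'

theorem nonempty_completeBipartite_embedding_of_common_neighbors (htf : G.CliqueFree 3)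
    {u v a b c : V} (huv : u ≠ v) (hab : a ≠ b) (hac : a ≠ c) (hbc : b ≠ c)
    (hua : G.Adj u a) (hub : G.Adj u b) (huc : G.Adj u c)
    (hva : G.Adj v a) (hvb : G.Adj v b) (hvc : G.Adj v c) :
    Nonempty (completeBipartiteGraph (Fin 2) (Fin 3) ↪g G) := by
  have := not_adj_of_cliqueFree_three htf hua.symm hva.symm
  have := not_adj_of_cliqueFree_three htf hua hub
  have := not_adj_of_cliqueFree_three htf hua huc
  have := not_adj_of_cliqueFree_three htf hub huc
  have := hua.ne; have := hub.ne; have := huc.ne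
  have := hva.ne; have := hvb.ne; have := hvc.ne
  let f : Fin 2 ⊕ Fin 3 → V := Sum.elim ![u, v] ![a, b, c]
  have hinj : f.Injective := by
    rintro (i | i) (j | j) h <;> fin_cases i <;> fin_cases j <;> simp_all [f]
  refine ⟨⟨⟨f, hinj⟩, fun {i j} => ?_⟩⟩
  rcases i with i | i <;> rcases j with j | j <;> fin_cases i <;> fin_cases j <;>
    simp [f, adj_comm, *]

theorem nonempty_ladder_embedding_of_cliqueFree (htf : G.CliqueFree 3)
    {a₁ a₂ a₃ b₁ b₂ b₃ : V}
    (ha₁₂ : G.Adj a₁ a₂) (ha₂₃ : G.Adj a₂ a₃) (hb₁₂ : G.Adj b₁ b₂) (hb₂₃ : G.Adj b₂ b₃)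
    (h₁ : G.Adj a₁ b₁) (h₂ : G.Adj a₂ b₂) (h₃ : G.Adj a₃ b₃)
    (ha₁b₃ : ¬ G.Adj a₁ b₃) (ha₃b₁ : ¬ G.Adj a₃ b₁)
    (hne₁ : a₁ ≠ a₃) (hne₂ : b₁ ≠ b₃) (hne₃ : a₁ ≠ b₂) (hne₄ : a₁ ≠ b₃)
    (hne₅ : a₂ ≠ b₁) (hne₆ : a₂ ≠ b₃) (hne₇ : a₃ ≠ b₁) (hne₈ : a₃ ≠ b₂) :
    Nonempty (ladder 3 ↪g G) := by
  have := not_adj_of_cliqueFree_three htf ha₁₂.symm ha₂₃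
  have := not_adj_of_cliqueFree_three htf hb₁₂.symm hb₂₃
  have := not_adj_of_cliqueFree_three htf ha₁₂.symm h₂
  have := not_adj_of_cliqueFree_three htf ha₁₂ h₁
  have := not_adj_of_cliqueFree_three htf h₂.symm hb₂₃
  have := not_adj_of_cliqueFree_three htf ha₂₃ h₂
  have := ha₁₂.ne; have := ha₂₃.ne; have := hb₁₂.ne; have := hb₂₃.ne
  have := h₁.ne; have := h₂.ne; have := h₃.ne
  let f : Fin 2 × Fin 3 → V := fun p => ![![a₁, a₂, a₃], ![b₁, b₂, b₃]] p.1 p.2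
  have hinj : f.Injective := by
    rintro ⟨i, j⟩ ⟨k, l⟩ h
    fin_cases i <;> fin_cases j <;> fin_cases k <;> fin_cases l <;> simp_all [f]
  refine ⟨⟨⟨f, hinj⟩, fun {p q} => ?_⟩⟩
  obtain ⟨i, j⟩ := p
  obtain ⟨k, l⟩ := q
  fin_cases i <;> fin_cases j <;> fin_cases k <;> fin_cases l <;>
    simp [f, ladder, pathGraph_adj, boxProd_adj, adj_comm, *]

theorem nonempty_ladder_embedding_of_chordless_path (hch : KChordal G 4)
    (htf : G.CliqueFree 3) (hK23 : ¬ Nonempty (completeBipartiteGraph (Fin 2) (Fin 3) ↪g G))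
    {x a m b y : V} (hxa : G.Adj x a) (ham : G.Adj a m) (hmb : G.Adj m b) (hbx : G.Adj b x)
    (hxm : x ≠ m) (hab : a ≠ b) (hdeg : (G.neighborSet x).ncard = 3) (hxy : G.Adj x y)
    (hya : y ≠ a) (hym : y ≠ m) (hyb : y ≠ b) {p : G.Walk y a} (hp : p.IsPath)
    (hpc : p.IsChordless) (hpx : x ∉ p.support) (hpb : b ∉ p.support) :
    Nonempty (ladder 3 ↪g G) := by
  have hN (w : V) (hw : G.Adj x w) : w = a ∨ w = b ∨ w = y :=
    eq_or_eq_or_eq_of_ncard_neighborSet_eq_three hdeg hxa hbx.symm hxy hab hya.symm hyb.symm hw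
  have hya' : ¬ G.Adj y a := not_adj_of_cliqueFree_three htf hxy hxa
  have hym' : ¬ G.Adj y m := fun h => hK23 <|
    nonempty_completeBipartite_embedding_of_common_neighbors htf hxm hab hya.symm hyb.symm
      hxa hbx.symm hxy ham.symm hmb h.symm
  have hlen : p.length = 2 := by
    have := hch.length_add_two_le hp hpc hya hpx hxy hxa.symm fun z hz hxz => by
      rcases hN z hxz with rfl | rfl | rfl
      · exact Or.inr rfl
      · exact absurd hz hpb
      · exact Or.inl rfl
    have h0 : p.length ≠ 0 := fun h => hya (eq_of_length_eq_zero h)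
    have h1 : p.length ≠ 1 := fun h => hya' (adj_of_length_eq_one h)
    omega
  set z := p.getVert 1
  have hyz : G.Adj y z := by simpa using p.adj_getVert_succ (i := 0) (by omega)
  have hza : G.Adj z a := by
    simpa [← hlen, getVert_length] using p.adj_getVert_succ (i := 1) (by omega)
  have hz : z ∈ p.support := p.getVert_mem_support 1
  have hzx : z ≠ x := fun h => hpx (h ▸ hz)
  have hzb : z ≠ b := fun h => hpb (h ▸ hz)
  have hzm : z ≠ m := fun h => hym' (h ▸ hyz)
  have hbz : ¬ G.Adj b z := fun h => hK23 <|
    nonempty_completeBipartite_embedding_of_common_neighbors htf hab hxm hzx.symm hzm.symm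
      hxa.symm ham hza.symm hbx hmb.symm h
  exact nonempty_ladder_embedding_of_cliqueFree htf hxy.symm hbx.symm hza ham hyz hxa hmb.symm
    hym' hbz hyb hzm hya hym hzx.symm hxm hzb.symm hab.symm

end

theorem stmt14_general {V : Type*} (G : SimpleGraph V)
    (h2c : TwoConnected G)
    (htf : G.CliqueFree 3)
    (hK23 : ¬ Nonempty (completeBipartiteGraph (Fin 2) (Fin 3) ↪g G))
    (hch : KChordal G 4)
    (hC4 : ∃ (v : V) (c : G.Walk v v), IsInducedCycle G c ∧ c.length = 4 ∧
      ∃ x ∈ c.support, (G.neighborSet x).ncard = 3 ∧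
        ∃ y : V, G.Adj x y ∧ y ∉ c.support) :
    Nonempty (ladder 3 ↪g G) := by
  classical
  obtain ⟨v, c, hc, hlen, x, hx, hdeg, y, hxy, hy⟩ := hC4
  obtain ⟨a, m, b, hxa, ham, hmb, hbx, hxm, hab, hsupp⟩ :=
    (hc.1.rotate hx).exists_of_length_eq_four (by simpa using hlen)
  simp only [Walk.mem_support_rotate_iff] at hsupp
  have hya : y ≠ a := fun h => hy ((hsupp y).mpr (by simp [h]))
  have hym : y ≠ m := fun h => hy ((hsupp y).mpr (by simp [h]))
  have hyb : y ≠ b := fun h => hy ((hsupp y).mpr (by simp [h]))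
  obtain ⟨w, hw⟩ := h2c.exists_walk_avoiding hxy.ne' hxa.ne'
  obtain ⟨d, hd, p, hp, hpc, hpT, hpS⟩ :=
    Walk.exists_chordless_path_to_set (S := {a, b}) (T := {x}) (by simp) w
      fun z hz (hzx : z = x) => hw (hzx ▸ hz)
  have hpx : x ∉ p.support := fun h => hpT x h rfl
  rcases hd with rfl | rfl
  · exact nonempty_ladder_embedding_of_chordless_path hch htf hK23 hxa ham hmb hbx hxm hab
      hdeg hxy hya hym hyb hp hpc hpx fun h => hab (hpS b h (by simp)).symm
  · exact nonempty_ladder_embedding_of_chordless_path hch htf hK23 hbx.symm hmb.symm ham.symm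
      hxa.symm hxm hab.symm hdeg hxy hyb hym hya hp hpc hpx fun h => hab (hpS a h (by simp))

theorem stmt14 {V : Type*} [Fintype V] (G : SimpleGraph V)
    (h2c : TwoConnected G)
    (hcyc : ∀ v : V, ∃ (u : V) (c : G.Walk u u), IsInducedCycle G c ∧ v ∈ c.support)
    (htf : G.CliqueFree 3)
    (hK23 : ¬ Nonempty (completeBipartiteGraph (Fin 2) (Fin 3) ↪g G))
    (hsub : ∀ v : V, (G.neighborSet v).ncard ≤ 3)
    (hch : KChordal G 4)
    (hC4 : ∃ (v : V) (c : G.Walk v v), IsInducedCycle G c ∧ c.length = 4 ∧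
      ∃ x ∈ c.support, (G.neighborSet x).ncard = 3 ∧
        ∃ y : V, G.Adj x y ∧ y ∉ c.support) :
    Nonempty (ladder 3 ↪g G) :=
  stmt14_general G h2c htf hK23 hch hC4
end

section
/- For every k ≥ 2, the graph B_k'' (obtained from P2 □ P_k by adding a vertex adjacent to two adjacent degree-2 vertices at one end, and then another vertex adjacent to the two adjacent degree-2 vertices at the other end) is a 2-connected subcubic 4-chordal graph with exactly two vertices of degree 2, namely the two added vertices. -/
open SimpleGraph

/-!
Every ladder vertex has three neighbours and each added vertex has the two vertices of an end
column. Deleting any vertex leaves a whole row of the ladder intact; that row is a path and every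
other remaining vertex is adjacent to it.

For 4-chordality, the vertex set `S` of an induced cycle induces a connected 2-regular subgraph.
Order the vertices by height (column index, with the two added vertices below the first and above
the last column) and take `x ∈ S` of greatest height. All but two neighbours of `x` are higher, so
both of those lie in `S`; continuing, `S` contains a triangle at an end of the ladder or a square of
the ladder around `x`. In a 2-regular induced subgraph such a triangle or square is closed under
adjacency, so by connectedness it is all of `S`.
-/

section TwoRegularInduced

variable {V : Type*} {G : SimpleGraph V} {S T : Set V}

lemma TwoRegularInduced.mem_of_inter_neighborSet_subset (hS : TwoRegularInduced G S) {u a b : V}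
    (hu : u ∈ S) (h : S ∩ G.neighborSet u ⊆ {a, b}) : a ∈ S ∧ b ∈ S := by
  have hcard : ({a, b} : Set V).ncard ≤ (S ∩ G.neighborSet u).ncard := by
    rw [hS u hu]
    exact (Set.ncard_insert_le a {b}).trans (by rw [Set.ncard_singleton])
  have heq : S ∩ G.neighborSet u = {a, b} := Set.eq_of_subset_of_ncard_le h hcard
  exact Set.pair_subset_iff.1 (heq ▸ Set.inter_subset_left)

lemma TwoRegularInduced.mem_of_adj_of_two_adj (hS : TwoRegularInduced G S) (hTS : T ⊆ S)
    (hT : ∀ u ∈ T, ∃ a ∈ T, ∃ b ∈ T, a ≠ b ∧ G.Adj u a ∧ G.Adj u b)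
    {u w : V} (hu : u ∈ T) (hw : w ∈ S) (huw : G.Adj u w) : w ∈ T := by
  obtain ⟨a, ha, b, hb, hab, hua, hub⟩ := hT u hu
  have hsub : ({a, b} : Set V) ⊆ S ∩ G.neighborSet u :=
    Set.insert_subset ⟨hTS ha, hua⟩ (Set.singleton_subset_iff.2 ⟨hTS hb, hub⟩)
  have heq := Set.eq_of_subset_of_ncard_le hsub (by rw [hS u (hTS hu), Set.ncard_pair hab])
    (Set.finite_of_ncard_ne_zero (by rw [hS u (hTS hu)]; decide))
  obtain rfl | rfl : w ∈ ({a, b} : Set V) := by rw [heq]; exact ⟨hw, huw⟩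
  exacts [ha, hb]

lemma TwoRegularInduced.mem_triangle_of_adj (hS : TwoRegularInduced G S) {x y z : V}
    (hx : x ∈ S) (hy : y ∈ S) (hz : z ∈ S) (hxy : G.Adj x y) (hxz : G.Adj x z) (hyz : G.Adj y z)
    {u w : V} (hu : u ∈ ({x, y, z} : Set V)) (hw : w ∈ S) (huw : G.Adj u w) :
    w ∈ ({x, y, z} : Set V) := by
  refine hS.mem_of_adj_of_two_adj (by simp [Set.insert_subset_iff, *]) ?_ hu hw huw
  rintro u (rfl | rfl | rfl)
  · exact ⟨y, by simp, z, by simp, hyz.ne, hxy, hxz⟩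
  · exact ⟨x, by simp, z, by simp, hxz.ne, hxy.symm, hyz⟩
  · exact ⟨x, by simp, y, by simp, hxy.ne, hxz.symm, hyz.symm⟩

lemma TwoRegularInduced.mem_square_of_adj (hS : TwoRegularInduced G S) {a b c d : V}
    (ha : a ∈ S) (hb : b ∈ S) (hc : c ∈ S) (hd : d ∈ S) (hab : G.Adj a b) (hac : G.Adj a c)
    (hbd : G.Adj b d) (hcd : G.Adj c d) (hbc : b ≠ c) (had : a ≠ d)
    {u w : V} (hu : u ∈ ({a, b, c, d} : Set V)) (hw : w ∈ S) (huw : G.Adj u w) :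
    w ∈ ({a, b, c, d} : Set V) := by
  refine hS.mem_of_adj_of_two_adj (by simp [Set.insert_subset_iff, *]) ?_ hu hw huw
  rintro u (rfl | rfl | rfl | rfl)
  · exact ⟨b, by simp, c, by simp, hbc, hab, hac⟩
  · exact ⟨a, by simp, d, by simp, had, hab.symm, hbd⟩
  · exact ⟨a, by simp, d, by simp, had, hac.symm, hcd⟩
  · exact ⟨b, by simp, c, by simp, hbc, hbd.symm, hcd.symm⟩

end TwoRegularInduced

section Walks

variable {V : Type*} {G : SimpleGraph V} {T : Set V}

lemma SimpleGraph.Walk.support_subset_of_adj_closed :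
    ∀ {a b : V} (p : G.Walk a b), a ∈ T → (∀ u ∈ T, ∀ w ∈ p.support, G.Adj u w → w ∈ T) →
      ∀ x ∈ p.support, x ∈ T
  | _, _, .nil, ha, _, x, hx => by
    obtain rfl : x = _ := by simpa using hx
    exact ha
  | _, _, .cons h p, ha, hT, x, hx => by
    rw [Walk.support_cons, List.mem_cons] at hx
    obtain rfl | hx := hx
    · exact ha
    · exact p.support_subset_of_adj_closed (hT _ ha _ (by simp) h)
        (fun u hu w hw => hT u hu w (List.mem_cons_of_mem _ hw)) x hx

lemma SimpleGraph.Walk.support_subset_of_adj_closed_of_mem {v x : V} (c : G.Walk v v)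
    (hx : x ∈ c.support) (hxT : x ∈ T) (hT : ∀ u ∈ T, ∀ w ∈ c.support, G.Adj u w → w ∈ T) :
    ∀ y ∈ c.support, y ∈ T := by
  classical
  intro y hy
  refine (c.rotate x hx).support_subset_of_adj_closed hxT (fun u hu w hw => ?_) y (by simpa)
  exact hT u hu w (by simpa using hw)

lemma SimpleGraph.Walk.IsCycle.length_le_ncard {v : V} {c : G.Walk v v} (hc : c.IsCycle)
    (hT : ∀ x ∈ c.support, x ∈ T) (hfin : T.Finite) : c.length ≤ T.ncard := by
  classical
  have hlen : c.support.tail.length = c.length := by simp [List.length_tail, Walk.length_support]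
  calc c.length = c.support.tail.toFinset.card := by
        rw [List.toFinset_card_of_nodup hc.support_nodup, hlen]
    _ = (c.support.tail.toFinset : Set V).ncard := (Set.ncard_coe_finset _).symm
    _ ≤ T.ncard := Set.ncard_le_ncard (fun x hx => hT x (List.mem_of_mem_tail (by simpa using hx)))
        hfin

lemma IsInducedCycle.twoRegularInduced {v : V} {c : G.Walk v v} (hc : IsInducedCycle G c) :
    TwoRegularInduced G {x | x ∈ c.support} := by
  intro x hx
  convert hc.1.ncard_neighborSet_toSubgraph_eq_two hx using 2
  ext y
  refine ⟨fun ⟨hy, hxy⟩ => ?_, fun h => ⟨c.mem_verts_toSubgraph.1 h.snd_mem, h.adj_sub⟩⟩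
  exact Subgraph.mem_edgeSet.1 (c.mem_edges_toSubgraph.2 (hc.2 x hx y hy hxy))

end Walks

section Ladder

variable {n : ℕ}

lemma ladder''_adj_inl_inl {k : ℕ} {i i' : Fin 2} {j j' : Fin k} :
    (ladder'' k).Adj (.inl (i, j)) (.inl (i', j')) ↔
      (i ≠ i' ∧ j = j') ∨ (i = i' ∧ (j.val + 1 = j'.val ∨ j'.val + 1 = j.val)) := by
  have := i.2; have := i'.2
  simp only [ladder'', fromRel_adj, ladder, boxProd_adj, pathGraph_adj, ne_eq, Sum.inl.injEq,
    Prod.mk.injEq, Fin.ext_iff, not_and]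
  omega

def endCol (n : ℕ) (c : Bool) : Fin (n + 1) := if c then Fin.last n else 0

lemma ladder''_adj_inl_inr {x : Fin 2 × Fin (n + 1)} {c : Bool} :
    (ladder'' (n + 1)).Adj (.inl x) (.inr c) ↔ x.2 = endCol n c := by
  cases c <;> simp [ladder'', endCol, Fin.ext_iff, -Fin.val_eq_zero_iff]

lemma ladder''_not_adj_inr_inr {k : ℕ} (c c' : Bool) : ¬ (ladder'' k).Adj (.inr c) (.inr c') := by
  simp [ladder'']

def ladderHeight : (Fin 2 × Fin (n + 1)) ⊕ Bool → ℕ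
  | .inr false => 0
  | .inl x => x.2.val + 1
  | .inr true => n + 2

lemma ladderHeight_inl (x : Fin 2 × Fin (n + 1)) : ladderHeight (.inl x) = x.2.val + 1 := rfl

def ladderDown (i : Fin 2) (j : Fin (n + 1)) : (Fin 2 × Fin (n + 1)) ⊕ Bool :=
  if h : j.val = 0 then .inr false else .inl (i, ⟨j.val - 1, by omega⟩)

def ladderUp (i : Fin 2) (j : Fin (n + 1)) : (Fin 2 × Fin (n + 1)) ⊕ Bool :=
  if h : j.val = n then .inr true else .inl (i, ⟨j.val + 1, by omega⟩)

lemma ladderHeight_down (i : Fin 2) (j : Fin (n + 1)) : ladderHeight (ladderDown i j) = j.val := by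
  unfold ladderDown; split_ifs with h <;> simp [ladderHeight, h]; omega

lemma ladderHeight_up (i : Fin 2) (j : Fin (n + 1)) : ladderHeight (ladderUp i j) = j.val + 2 := by
  unfold ladderUp; split_ifs with h <;> simp [ladderHeight, h]

lemma ladder''_neighborSet_inl (i : Fin 2) (j : Fin (n + 1)) :
    (ladder'' (n + 1)).neighborSet (.inl (i, j)) =
      {.inl (i.rev, j), ladderDown i j, ladderUp i j} := by
  ext (⟨i', j'⟩ | c)
  · have := i.2; have := i'.2; have := j'.2
    simp only [mem_neighborSet, ladder''_adj_inl_inl, ladderDown, ladderUp, Set.mem_insert_iff,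
      Set.mem_singleton_iff]
    split_ifs <;> simp [Fin.ext_iff, Fin.val_rev] <;> omega
  · simp only [mem_neighborSet, ladder''_adj_inl_inr, ladderDown, ladderUp, Set.mem_insert_iff,
      Set.mem_singleton_iff, endCol]
    cases c <;> split_ifs <;> simp_all [Fin.ext_iff, -Fin.val_eq_zero_iff]

lemma ladder''_neighborSet_inr (c : Bool) :
    (ladder'' (n + 1)).neighborSet (.inr c) = {.inl (0, endCol n c), .inl (1, endCol n c)} := by
  ext (⟨i, j⟩ | c')
  · have := i.2
    simp only [mem_neighborSet, adj_comm, ladder''_adj_inl_inr, Set.mem_insert_iff,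
      Set.mem_singleton_iff, Sum.inl.injEq, Prod.mk.injEq, Fin.ext_iff]
    omega
  · simp [ladder''_not_adj_inr_inr]

lemma ladder''_ncard_neighborSet_inl (i : Fin 2) (j : Fin (n + 1)) :
    ((ladder'' (n + 1)).neighborSet (.inl (i, j))).ncard = 3 := by
  have h1 := ladderHeight_down i j
  have h2 := ladderHeight_up i j
  rw [ladder''_neighborSet_inl, Set.ncard_eq_three]
  refine ⟨_, _, _, fun h => ?_, fun h => ?_, fun h => ?_, rfl⟩ <;>
    have := congrArg ladderHeight h <;> simp only [ladderHeight_inl, h1, h2] at this <;> omega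

lemma ladder''_ncard_neighborSet_inr (c : Bool) :
    ((ladder'' (n + 1)).neighborSet (.inr c)).ncard = 2 := by
  rw [ladder''_neighborSet_inr, Set.ncard_pair (by simp)]

lemma ladder''_induce_reachable_row {k : ℕ} {s : Set ((Fin 2 × Fin k) ⊕ Bool)} {r : Fin 2}
    (hr : ∀ j, .inl (r, j) ∈ s) (j j' : Fin k) :
    ((ladder'' k).induce s).Reachable ⟨_, hr j⟩ ⟨_, hr j'⟩ :=
  let f : pathGraph k →g (ladder'' k).induce s :=
    { toFun := fun j => ⟨_, hr j⟩
      map_rel' := fun h => ladder''_adj_inl_inl.2 (.inr ⟨rfl, pathGraph_adj.1 h⟩) }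
  (pathGraph_preconnected k j j').map f

lemma ladder''_induce_connected_of_row {s : Set ((Fin 2 × Fin (n + 1)) ⊕ Bool)} {r : Fin 2}
    (hr : ∀ j, .inl (r, j) ∈ s) : ((ladder'' (n + 1)).induce s).Connected := by
  rw [connected_iff_exists_forall_reachable]
  refine ⟨⟨_, hr 0⟩, fun ⟨w, hw⟩ => ?_⟩
  obtain ⟨j, hj⟩ : ∃ j, ((ladder'' (n + 1)).induce s).Reachable ⟨_, hr j⟩ ⟨w, hw⟩ := by
    rcases w with ⟨i, j⟩ | c
    · refine ⟨j, ?_⟩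
      by_cases hi : r = i
      · subst hi; rfl
      · exact Adj.reachable (ladder''_adj_inl_inl.2 (.inl ⟨hi, rfl⟩))
    · exact ⟨endCol n c, Adj.reachable (ladder''_adj_inl_inr.2 rfl)⟩
  exact (ladder''_induce_reachable_row hr 0 j).trans hj

lemma ladder''_induce_ne_connected (v : (Fin 2 × Fin (n + 1)) ⊕ Bool) :
    ((ladder'' (n + 1)).induce {w | w ≠ v}).Connected := by
  obtain ⟨r, hr⟩ : ∃ r : Fin 2, ∀ j, .inl (r, j) ≠ v := by
    rcases v with ⟨i, _⟩ | _
    · refine ⟨i.rev, fun j h => ?_⟩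
      have := i.2
      simp only [Sum.inl.injEq, Prod.mk.injEq, Fin.ext_iff, Fin.val_rev] at h
      omega
    · exact ⟨0, fun _ => Sum.inl_ne_inr⟩
  exact ladder''_induce_connected_of_row hr

variable {S : Set ((Fin 2 × Fin (n + 1)) ⊕ Bool)}

lemma ladder''_mem_of_ladderHeight_le (hS : TwoRegularInduced (ladder'' (n + 1)) S) {i : Fin 2}
    {j : Fin (n + 1)} (hA : .inl (i, j) ∈ S) (hmax : ∀ y ∈ S, ladderHeight y ≤ j.val + 1) :
    .inl (i.rev, j) ∈ S ∧ ladderDown i j ∈ S := by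
  refine hS.mem_of_inter_neighborSet_subset hA fun w ⟨hwS, hw⟩ => ?_
  rw [ladder''_neighborSet_inl] at hw
  rcases hw with rfl | rfl | rfl
  · exact .inl rfl
  · exact .inr rfl
  · have := hmax _ hwS
    rw [ladderHeight_up] at this
    omega

lemma ladder''_exists_adj_closed (hS : TwoRegularInduced (ladder'' (n + 1)) S)
    (hne : S.Nonempty) :
    ∃ T : Set ((Fin 2 × Fin (n + 1)) ⊕ Bool), (S ∩ T).Nonempty ∧ T.ncard ≤ 4 ∧
      ∀ u ∈ T, ∀ w ∈ S, (ladder'' (n + 1)).Adj u w → w ∈ T := by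
  have hN (c : Bool) : S ∩ (ladder'' (n + 1)).neighborSet (.inr c) ⊆
      {.inl (0, endCol n c), .inl (1, endCol n c)} := by
    rw [← ladder''_neighborSet_inr]; exact Set.inter_subset_right
  by_cases htop : .inr true ∈ S
  · obtain ⟨h0, h1⟩ := hS.mem_of_inter_neighborSet_subset htop (hN true)
    refine ⟨_, ⟨_, htop, Set.mem_insert _ _⟩, by grind [Set.ncard_insert_le, Set.ncard_singleton],
      fun u hu w hw huw => hS.mem_triangle_of_adj htop h0 h1 (ladder''_adj_inl_inr.2 rfl).symm
        (ladder''_adj_inl_inr.2 rfl).symm ?_ hu hw huw⟩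
    exact ladder''_adj_inl_inl.2 (.inl ⟨by decide, rfl⟩)
  obtain ⟨x, hxS, hmax⟩ := Set.exists_max_image S ladderHeight S.toFinite hne
  rcases x with ⟨i, j⟩ | _ | _
  · obtain ⟨hB, hC⟩ := ladder''_mem_of_ladderHeight_le hS hxS hmax
    obtain ⟨-, hD⟩ := ladder''_mem_of_ladderHeight_le hS hB hmax
    have hAC : (ladder'' (n + 1)).Adj (.inl (i, j)) (ladderDown i j) := by
      rw [← mem_neighborSet, ladder''_neighborSet_inl]; exact .inr (.inl rfl)
    have hBD : (ladder'' (n + 1)).Adj (.inl (i.rev, j)) (ladderDown i.rev j) := by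
      rw [← mem_neighborSet, ladder''_neighborSet_inl]; exact .inr (.inl rfl)
    have hrev : i ≠ i.rev := by
      have := i.2
      simp only [ne_eq, Fin.ext_iff, Fin.val_rev]
      omega
    have hAB : (ladder'' (n + 1)).Adj (.inl (i, j)) (.inl (i.rev, j)) :=
      ladder''_adj_inl_inl.2 (.inl ⟨hrev, rfl⟩)
    by_cases hj : j.val = 0
    · have hdown : ∀ i, ladderDown i j = .inr false := fun i => by simp [ladderDown, hj]
      rw [hdown] at hC hAC hBD
      refine ⟨_, ⟨_, hxS, Set.mem_insert _ _⟩, by grind [Set.ncard_insert_le, Set.ncard_singleton],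
        fun u hu w hw huw => hS.mem_triangle_of_adj hxS hB hC hAB hAC hBD hu hw huw⟩
    · have hCD : (ladder'' (n + 1)).Adj (ladderDown i j) (ladderDown i.rev j) := by
        simp only [ladderDown, hj, dite_false]
        exact ladder''_adj_inl_inl.2 (.inl ⟨hrev, rfl⟩)
      have hlevel := fun i => ladderHeight_down (n := n) i j
      refine ⟨_, ⟨_, hxS, Set.mem_insert _ _⟩, by grind [Set.ncard_insert_le, Set.ncard_singleton],
        fun u hu w hw huw => hS.mem_square_of_adj hxS hB hC hD hAB hAC hBD hCD ?_ ?_ hu hw huw⟩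
      · exact fun h => by simpa [ladderHeight_inl, hlevel] using congrArg ladderHeight h
      · exact fun h => by simpa [ladderHeight_inl, hlevel] using congrArg ladderHeight h
  · obtain ⟨h0, -⟩ := hS.mem_of_inter_neighborSet_subset hxS (hN false)
    exact absurd (hmax _ h0) (by simp [ladderHeight])
  · exact absurd hxS htop

lemma ladder''_kChordal : KChordal (ladder'' (n + 1)) 4 := by
  intro v c hc
  obtain ⟨T, ⟨x, hxS, hxT⟩, hT4, hT⟩ :=
    ladder''_exists_adj_closed hc.twoRegularInduced ⟨v, c.start_mem_support⟩
  have hsub := c.support_subset_of_adj_closed_of_mem hxS hxT fun u hu w hw => hT u hu w hw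
  exact (hc.1.length_le_ncard hsub T.toFinite).trans hT4

end Ladder

theorem stmt18 (k : ℕ) (hk : 2 ≤ k) :
    TwoConnected (ladder'' k) ∧
    (∀ v, ((ladder'' k).neighborSet v).ncard ≤ 3) ∧
    KChordal (ladder'' k) 4 ∧
    (∀ v : (Fin 2 × Fin k) ⊕ Bool,
      ((ladder'' k).neighborSet v).ncard = 2 ↔ ∃ b : Bool, v = Sum.inr b) := by
  obtain ⟨n, rfl⟩ : ∃ n, k = n + 1 := ⟨k - 1, by omega⟩
  refine ⟨⟨?_, ladder''_induce_ne_connected⟩, ?_, ladder''_kChordal, ?_⟩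
  · simp only [Nat.card_eq_fintype_card, Fintype.card_sum, Fintype.card_prod, Fintype.card_fin,
      Fintype.card_bool]
    omega
  · rintro (⟨i, j⟩ | c)
    · rw [ladder''_ncard_neighborSet_inl]
    · rw [ladder''_ncard_neighborSet_inr]; omega
  · rintro (⟨i, j⟩ | c)
    · simp [ladder''_ncard_neighborSet_inl]
    · simp [ladder''_ncard_neighborSet_inr]
end
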